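/- Let L denote the Rogers dilogarithm. Then L(7/2 − 3√5/2) + 2·L(1/2 − √5/10) = 2π²/15. -/

import Mathlib

/-- The real dilogarithm `Li₂(z) = ∑_{n=1}^∞ zⁿ/n²`. -/
noncomputable def dilog (z : ℝ) : ℝ := ∑' n : ℕ, z ^ (n + 1) / ((n : ℝ) + 1) ^ 2

/-- The (non-normalized) Rogers dilogarithm `L(z) = Li₂(z) + (1/2) log z log (1 - z)`. -/
noncomputable def rogersL (z : ℝ) : ℝ := dilog z + 1 / 2 * Real.log z * Real.log (1 - z)

open Real Filter Set Topology

lemma summable_inv_sq : Summable (fun n : ℕ => 1 / ((n : ℝ) + 1) ^ 2) := by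
  have := Real.summable_one_div_nat_pow.mpr (le_refl 2)
  have h := (summable_nat_add_iff 1).mpr this
  simpa [Nat.cast_add] using h

lemma summable_dilog {x : ℝ} (h : |x| ≤ 1) :
    Summable (fun n : ℕ => x ^ (n + 1) / ((n : ℝ) + 1) ^ 2) := by
  refine Summable.of_norm_bounded summable_inv_sq fun n => ?_
  rw [norm_div, Real.norm_eq_abs, Real.norm_eq_abs, abs_pow]
  have h1 : (0:ℝ) < ((n:ℝ)+1)^2 := by positivity
  rw [abs_of_pos h1]
  gcongr
  exact pow_le_one₀ (abs_nonneg x) h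

lemma dilog_continuousOn : ContinuousOn dilog (Icc (-1:ℝ) 1) := by
  apply continuousOn_tsum (u := fun n : ℕ => 1 / ((n : ℝ) + 1) ^ 2)
    (fun i => (continuous_pow _).continuousOn.div_const _) summable_inv_sq
  intro n x hx
  rw [norm_div, Real.norm_eq_abs, Real.norm_eq_abs, abs_pow]
  have h1 : (0:ℝ) < ((n:ℝ)+1)^2 := by positivity
  have hx1 : |x| ≤ 1 := abs_le.mpr ⟨hx.1, hx.2⟩
  rw [abs_of_pos h1]
  gcongr
  exact pow_le_one₀ (abs_nonneg x) hx1

lemma dilog_zero : dilog 0 = 0 := by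
  simp [dilog]

lemma dilog_one : dilog 1 = Real.pi ^ 2 / 6 := by
  have h := hasSum_zeta_two
  have h2 : HasSum (fun n : ℕ => 1 / ((n : ℝ) + 1) ^ 2) (Real.pi ^ 2 / 6) := by
    have h3 := (hasSum_nat_add_iff' (f := fun n : ℕ => 1 / (n : ℝ) ^ 2) 1).mpr (by simpa using h)
    simpa using h3
  simpa [dilog] using h2.tsum_eq

lemma dilog_hasDerivAt {x : ℝ} (hx : |x| < 1) :
    HasDerivAt dilog (∑' n : ℕ, x ^ n / ((n : ℝ) + 1)) x := by
  set r : ℝ := (1 + |x|) / 2 with hr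
  have hr0 : 0 ≤ r := by positivity
  have hr1 : r < 1 := by simp only [hr]; linarith
  have hxr : |x| < r := by simp only [hr]; linarith
  apply hasDerivAt_tsum_of_isPreconnected (u := fun n : ℕ => r ^ n)
    (summable_geometric_of_lt_one hr0 hr1) (Metric.isOpen_ball (x := (0:ℝ)) (ε := r))
    ((convex_ball (0:ℝ) r).isPreconnected)
    (g' := fun n y => y ^ n / ((n : ℝ) + 1)) (y₀ := 0)
  · intro n y _
    have h := (hasDerivAt_pow (n + 1) y).div_const (((n : ℝ) + 1) ^ 2)
    refine h.congr_deriv ?_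
    have hn : ((n : ℝ) + 1) ≠ 0 := by positivity
    push_cast
    field_simp
  · intro n y hy
    rw [Real.norm_eq_abs, abs_div, abs_pow]
    have hyr : |y| < r := by simpa [Real.dist_eq] using hy
    have h1 : |y| ^ n ≤ r ^ n := pow_le_pow_left₀ (abs_nonneg y) hyr.le n
    have h2 : (1:ℝ) ≤ |((n:ℝ) + 1)| := by
      rw [abs_of_pos (by positivity)]; simp
    calc |y| ^ n / |((n:ℝ) + 1)| ≤ |y| ^ n / 1 := by gcongr
      _ = |y| ^ n := div_one _
      _ ≤ r ^ n := h1
  · simpa [Real.dist_eq] using lt_of_le_of_lt (abs_nonneg x) hxr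
  · simpa using summable_zero
  · simpa [Real.dist_eq] using hxr

lemma dilog_hasDerivAt' {x : ℝ} (h0 : 0 < x) (h1 : x < 1) :
    HasDerivAt dilog (-Real.log (1 - x) / x) x := by
  have hx : |x| < 1 := abs_lt.mpr ⟨by linarith, h1⟩
  have h := dilog_hasDerivAt hx
  have hs : HasSum (fun n : ℕ => x ^ n / ((n : ℝ) + 1)) (-Real.log (1 - x) / x) := by
    have := (hasSum_pow_div_log_of_abs_lt_one hx).mul_left x⁻¹
    have he : (fun n : ℕ => x⁻¹ * (x ^ (n + 1) / ((n : ℝ) + 1))) =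
        fun n : ℕ => x ^ n / ((n : ℝ) + 1) := by
      funext n
      field_simp [pow_succ]
      try ring
    rw [he] at this
    rw [div_eq_inv_mul]
    exact this
  rwa [hs.tsum_eq] at h

lemma rogersL_hasDerivAt {x : ℝ} (h0 : 0 < x) (h1 : x < 1) :
    HasDerivAt rogersL
      (-(1/2) * (Real.log (1-x)/x + Real.log x/(1-x))) x := by
  have hx1 : (0:ℝ) < 1 - x := by linarith
  have hd := dilog_hasDerivAt' h0 h1
  have hlog : HasDerivAt Real.log x⁻¹ x := Real.hasDerivAt_log h0.ne'
  have hlin : HasDerivAt (fun y : ℝ => 1 - y) (-1) x := by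
    simpa using (hasDerivAt_id x).const_sub 1
  have hlog2 : HasDerivAt (fun y : ℝ => Real.log (1 - y)) ((1-x)⁻¹ * (-1)) x :=
    (Real.hasDerivAt_log hx1.ne').comp x hlin
  have h := hd.add ((((hlog.const_mul (1/2:ℝ))).mul hlog2))
  have : rogersL = fun y => dilog y + 1 / 2 * Real.log y * Real.log (1 - y) := rfl
  rw [this]
  refine h.congr_deriv ?_
  field_simp
  ring

lemma abs_log_one_sub_le {x : ℝ} (h0 : 0 ≤ x) (h1 : x < 1) :
    |Real.log (1 - x)| ≤ x / (1 - x) := by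
  have hx1 : (0:ℝ) < 1 - x := by linarith
  have hle : Real.log (1 - x) ≤ 0 := Real.log_nonpos (by linarith) (by linarith)
  rw [abs_of_nonpos hle]
  have := Real.log_le_sub_one_of_pos (x := (1-x)⁻¹) (by positivity)
  rw [Real.log_inv] at this
  have h2 : (1-x)⁻¹ - 1 = x / (1-x) := by field_simp; ring
  linarith [h2 ▸ this]

lemma tendsto_log_mul_log_zero :
    Tendsto (fun x : ℝ => Real.log x * Real.log (1 - x)) (𝓝[Ioo (0:ℝ) 1] 0) (𝓝 0) := by
  have h := tendsto_log_mul_rpow_nhdsGT_zero (r := 1) one_pos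
  have h2 : Tendsto (fun x : ℝ => 2 * (Real.log x * x ^ (1:ℝ))) (𝓝[>] (0:ℝ)) (𝓝 0) := by
    simpa using h.const_mul 2
  have h3 : Tendsto (fun x : ℝ => 2 * (Real.log x * x)) (𝓝[Ioo (0:ℝ) 1] 0) (𝓝 0) := by
    apply (h2.mono_left (nhdsWithin_mono _ fun y hy => hy.1)).congr'
    filter_upwards [self_mem_nhdsWithin] with y hy
    rw [Real.rpow_one]
  apply squeeze_zero_norm' ?_ (by simpa using h3.norm)
  have hhalf : ∀ᶠ y in 𝓝[Ioo (0:ℝ) 1] 0, y < 1/2 :=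
    eventually_nhdsWithin_of_eventually_nhds (eventually_lt_nhds (by norm_num))
  filter_upwards [self_mem_nhdsWithin, hhalf] with y hy hy2
  obtain ⟨hy0, hy1⟩ := hy
  rw [Real.norm_eq_abs, abs_mul]
  have hb := abs_log_one_sub_le hy0.le hy1
  have hb2 : y / (1 - y) ≤ 2 * y := by
    rw [div_le_iff₀ (by linarith)]
    nlinarith
  have hlogy : 0 ≤ |Real.log y| := abs_nonneg _
  have h4 : |Real.log y| * |Real.log (1 - y)| ≤ |Real.log y| * (2 * y) :=
    mul_le_mul_of_nonneg_left (hb.trans hb2) hlogy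
  refine h4.trans ?_
  rw [abs_of_pos hy0]
  ring_nf
  nlinarith [abs_nonneg (Real.log y)]

lemma tendsto_dilog_at {a : ℝ} (ha : a ∈ Icc (-1:ℝ) 1) :
    Tendsto dilog (𝓝[Ioo (0:ℝ) 1] a) (𝓝 (dilog a)) := by
  have h := (dilog_continuousOn a ha).tendsto
  exact h.mono_left (nhdsWithin_mono _ (fun y hy => ⟨by linarith [hy.1], hy.2.le⟩))

lemma tendsto_rogersL_zero : Tendsto rogersL (𝓝[Ioo (0:ℝ) 1] 0) (𝓝 0) := by
  have h1 := tendsto_dilog_at (a := 0) (by norm_num)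
  rw [dilog_zero] at h1
  have h2 := tendsto_log_mul_log_zero
  have : rogersL = fun z => dilog z + 1 / 2 * (Real.log z * Real.log (1 - z)) := by
    funext z; rw [rogersL]; ring
  rw [this]
  simpa using h1.add (h2.const_mul (1/2:ℝ))

lemma tendsto_rogersL_one : Tendsto rogersL (𝓝[Ioo (0:ℝ) 1] 1) (𝓝 (Real.pi ^ 2 / 6)) := by
  have h1 := tendsto_dilog_at (a := 1) (by norm_num)
  rw [dilog_one] at h1
  have hmap : Tendsto (fun x : ℝ => 1 - x) (𝓝[Ioo (0:ℝ) 1] 1) (𝓝[Ioo (0:ℝ) 1] 0) := by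
    apply tendsto_nhdsWithin_of_tendsto_nhds_of_eventually_within
    · have hc : Continuous (fun x : ℝ => 1 - x) := by continuity
      have hc2 : Tendsto (fun x : ℝ => 1 - x) (𝓝 (1:ℝ)) (𝓝 0) := by
        simpa using hc.tendsto (1:ℝ)
      exact hc2.mono_left nhdsWithin_le_nhds
    · filter_upwards [self_mem_nhdsWithin] with y hy
      exact ⟨by linarith [hy.2], by linarith [hy.1]⟩
  have h2 : Tendsto (fun x : ℝ => Real.log (1 - x) * Real.log (1 - (1 - x)))
      (𝓝[Ioo (0:ℝ) 1] 1) (𝓝 0) := tendsto_log_mul_log_zero.comp hmap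
  have h2' : Tendsto (fun x : ℝ => Real.log x * Real.log (1 - x))
      (𝓝[Ioo (0:ℝ) 1] 1) (𝓝 0) := by
    apply h2.congr'
    filter_upwards [self_mem_nhdsWithin] with y _
    rw [sub_sub_cancel]; ring
  have : rogersL = fun z => dilog z + 1 / 2 * (Real.log z * Real.log (1 - z)) := by
    funext z; rw [rogersL]; ring
  rw [this]
  simpa using h1.add (h2'.const_mul (1/2:ℝ))

/-- A function with zero derivative on `(0,1)` and a limit `c` at an endpoint equals `c`. -/
lemma eq_const_of_deriv_zero (F : ℝ → ℝ) (hF : ∀ x ∈ Ioo (0:ℝ) 1, HasDerivAt F 0 x)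
    (c b : ℝ) (hb : b ∈ Icc (0:ℝ) 1) (hlim : Tendsto F (𝓝[Ioo (0:ℝ) 1] b) (𝓝 c))
    {x : ℝ} (hx : x ∈ Ioo (0:ℝ) 1) : F x = c := by
  have hconst : ∀ y ∈ Ioo (0:ℝ) 1, F y = F x := by
    intro y hy
    apply (convex_Ioo (0:ℝ) 1).is_const_of_fderivWithin_eq_zero
      (fun z hz => ((hF z hz).differentiableAt).differentiableWithinAt) ?_ hy hx
    intro z hz
    rw [fderivWithin_of_isOpen isOpen_Ioo hz]
    have hdz : HasFDerivAt F (ContinuousLinearMap.smulRight (1 : ℝ →L[ℝ] ℝ) 0) z :=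
      (hF z hz).hasFDerivAt
    rw [hdz.fderiv]
    exact ContinuousLinearMap.ext fun t => by simp
  have hne : (𝓝[Ioo (0:ℝ) 1] b).NeBot := by
    apply mem_closure_iff_nhdsWithin_neBot.mp
    rw [closure_Ioo (by norm_num : (0:ℝ) ≠ 1)]
    exact hb
  have hlim2 : Tendsto F (𝓝[Ioo (0:ℝ) 1] b) (𝓝 (F x)) := by
    apply Tendsto.congr' ?_ tendsto_const_nhds
    filter_upwards [self_mem_nhdsWithin] with y hy
    exact (hconst y hy).symm
  exact tendsto_nhds_unique hlim2 hlim

lemma rogersL_reflection {x : ℝ} (hx : x ∈ Ioo (0:ℝ) 1) :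
    rogersL x + rogersL (1 - x) = Real.pi ^ 2 / 6 := by
  set F : ℝ → ℝ := fun y => rogersL y + rogersL (1 - y) with hF
  have hder : ∀ y ∈ Ioo (0:ℝ) 1, HasDerivAt F 0 y := by
    intro y hy
    obtain ⟨hy0, hy1⟩ := hy
    have h1 := rogersL_hasDerivAt hy0 hy1
    have h2 := rogersL_hasDerivAt (x := 1 - y) (by linarith) (by linarith)
    have hlin : HasDerivAt (fun z : ℝ => 1 - z) (-1) y := by
      simpa using (hasDerivAt_id y).const_sub 1
    have h3 := (h2.comp y hlin)
    have h := h1.add h3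
    refine h.congr_deriv ?_
    rw [sub_sub_cancel]
    field_simp
    ring
  have hlim : Tendsto F (𝓝[Ioo (0:ℝ) 1] 1) (𝓝 (Real.pi ^ 2 / 6)) := by
    have hmap : Tendsto (fun y : ℝ => 1 - y) (𝓝[Ioo (0:ℝ) 1] 1) (𝓝[Ioo (0:ℝ) 1] 0) := by
      apply tendsto_nhdsWithin_of_tendsto_nhds_of_eventually_within
      · have hc : Continuous (fun y : ℝ => 1 - y) := by continuity
        have hc2 : Tendsto (fun y : ℝ => 1 - y) (𝓝 (1:ℝ)) (𝓝 0) := by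
          simpa using hc.tendsto (1:ℝ)
        exact hc2.mono_left nhdsWithin_le_nhds
      · filter_upwards [self_mem_nhdsWithin] with y hy
        exact ⟨by linarith [hy.2], by linarith [hy.1]⟩
    have := tendsto_rogersL_one.add (tendsto_rogersL_zero.comp hmap)
    simpa using this
  exact eq_const_of_deriv_zero F hder _ 1 (by norm_num) hlim hx

lemma rogersL_duplication {x : ℝ} (hx : x ∈ Ioo (0:ℝ) 1) :
    rogersL (x ^ 2) + 2 * rogersL (x / (1 + x)) = 2 * rogersL x := by
  set G : ℝ → ℝ := fun y => rogersL (y ^ 2) + 2 * rogersL (y / (1 + y)) - 2 * rogersL y with hG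
  have hder : ∀ y ∈ Ioo (0:ℝ) 1, HasDerivAt G 0 y := by
    intro y hy
    obtain ⟨hy0, hy1⟩ := hy
    have hy2a : 0 < y ^ 2 := by positivity
    have hy2b : y ^ 2 < 1 := by nlinarith
    have hden : (0:ℝ) < 1 + y := by linarith
    have hu0 : 0 < y / (1 + y) := by positivity
    have hu1 : y / (1 + y) < 1 := by rw [div_lt_one hden]; linarith
    have hpow : HasDerivAt (fun z : ℝ => z ^ 2) (2 * y) y := by
      simpa using hasDerivAt_pow 2 y
    have h1 : HasDerivAt (fun z : ℝ => rogersL (z ^ 2))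
        ((-(1/2) * (Real.log (1 - y^2)/(y^2) + Real.log (y^2)/(1 - y^2))) * (2 * y)) y := by
      have := HasDerivAt.comp (h₂ := rogersL) (h := fun z : ℝ => z ^ 2) y
        (rogersL_hasDerivAt hy2a hy2b) hpow
      simpa [Function.comp_def] using this
    have hq : HasDerivAt (fun z : ℝ => z / (1 + z))
        ((1 * (1 + y) - y * 1) / (1 + y) ^ 2) y :=
      (hasDerivAt_id y).div ((hasDerivAt_id y).const_add 1) hden.ne'
    have h2' : HasDerivAt (fun z : ℝ => rogersL (z / (1 + z)))
        ((-(1/2) * (Real.log (1 - y/(1+y))/(y/(1+y)) + Real.log (y/(1+y))/(1 - y/(1+y)))) *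
          ((1 * (1 + y) - y * 1) / (1 + y) ^ 2)) y := by
      have := HasDerivAt.comp (h₂ := rogersL) (h := fun z : ℝ => z / (1 + z)) y
        (rogersL_hasDerivAt hu0 hu1) hq
      simpa [Function.comp_def] using this
    have h2 := h2'.const_mul (2:ℝ)
    have h3 := (rogersL_hasDerivAt hy0 hy1).const_mul (2:ℝ)
    have h := (h1.add h2).sub h3
    have hA : Real.log (y ^ 2) = 2 * Real.log y := by
      rw [Real.log_pow]; push_cast; ring
    have hB : Real.log (1 - y ^ 2) = Real.log (1 - y) + Real.log (1 + y) := by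
      rw [show (1:ℝ) - y ^ 2 = (1 - y) * (1 + y) by ring,
        Real.log_mul (by linarith) hden.ne']
    have hC : Real.log (y / (1 + y)) = Real.log y - Real.log (1 + y) :=
      Real.log_div hy0.ne' hden.ne'
    have hD : Real.log (1 - y / (1 + y)) = -Real.log (1 + y) := by
      rw [show (1:ℝ) - y / (1 + y) = (1 + y)⁻¹ by field_simp; ring, Real.log_inv]
    refine h.congr_deriv ?_
    rw [hA, hB, hC, hD]
    have h1y : (1:ℝ) - y ≠ 0 := by linarith
    have h1y2 : (1:ℝ) - y ^ 2 ≠ 0 := by nlinarith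
    field_simp
    ring
  have hlim : Tendsto G (𝓝[Ioo (0:ℝ) 1] 0) (𝓝 0) := by
    have hmap1 : Tendsto (fun y : ℝ => y ^ 2) (𝓝[Ioo (0:ℝ) 1] 0) (𝓝[Ioo (0:ℝ) 1] 0) := by
      apply tendsto_nhdsWithin_of_tendsto_nhds_of_eventually_within
      · have hc : Continuous (fun y : ℝ => y ^ 2) := by continuity
        have h0 : Tendsto (fun y : ℝ => y ^ 2) (𝓝 (0:ℝ)) (𝓝 0) := by
          simpa using hc.tendsto (0:ℝ)
        exact h0.mono_left nhdsWithin_le_nhds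
      · filter_upwards [self_mem_nhdsWithin] with y hy
        obtain ⟨hy0', hy1'⟩ := hy
        exact ⟨by positivity, by nlinarith⟩
    have hmap2 : Tendsto (fun y : ℝ => y / (1 + y)) (𝓝[Ioo (0:ℝ) 1] 0) (𝓝[Ioo (0:ℝ) 1] 0) := by
      apply tendsto_nhdsWithin_of_tendsto_nhds_of_eventually_within
      · have hc : ContinuousAt (fun y : ℝ => y / (1 + y)) 0 := by
          apply ContinuousAt.div continuousAt_id
            ((continuous_const.add continuous_id).continuousAt)
          norm_num
        have h0 : Tendsto (fun y : ℝ => y / (1 + y)) (𝓝 (0:ℝ)) (𝓝 0) := by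
          simpa using hc.tendsto
        exact h0.mono_left nhdsWithin_le_nhds
      · filter_upwards [self_mem_nhdsWithin] with y hy
        obtain ⟨hy0', hy1'⟩ := hy
        have hd : (0:ℝ) < 1 + y := by linarith
        exact ⟨by positivity, by rw [div_lt_one hd]; linarith⟩
    have := ((tendsto_rogersL_zero.comp hmap1).add
      ((tendsto_rogersL_zero.comp hmap2).const_mul (2:ℝ))).sub
      (tendsto_rogersL_zero.const_mul (2:ℝ))
    simpa using this
  have := eq_const_of_deriv_zero G hder 0 0 (by norm_num) hlim hx
  have hGx : G x = rogersL (x ^ 2) + 2 * rogersL (x / (1 + x)) - 2 * rogersL x := rfl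
  linarith [hGx ▸ this]

/-- A known two-term dilogarithm identity over ℚ(√5) with coefficient 2. -/
theorem sqrt5_two_term' :
    rogersL (7 / 2 - 3 * Real.sqrt 5 / 2) + 2 * rogersL (1 / 2 - Real.sqrt 5 / 10) =
      2 * Real.pi ^ 2 / 15 := by
  have hs5 : Real.sqrt 5 ^ 2 = 5 := Real.sq_sqrt (by norm_num)
  have hs0 : 0 ≤ Real.sqrt 5 := Real.sqrt_nonneg 5
  have hs2 : 2 < Real.sqrt 5 := by nlinarith
  have hs3 : Real.sqrt 5 < 3 := by nlinarith
  set s := Real.sqrt 5 with hsdef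
  set a : ℝ := (s - 1) / 2 with ha
  set yv : ℝ := (3 - s) / 2 with hyv
  have hamem : a ∈ Ioo (0:ℝ) 1 :=
    Set.mem_Ioo.mpr ⟨by rw [ha]; linarith, by rw [ha]; linarith⟩
  have hymem : yv ∈ Ioo (0:ℝ) 1 :=
    Set.mem_Ioo.mpr ⟨by rw [hyv]; linarith, by rw [hyv]; linarith⟩
  have hane : (1:ℝ) + a ≠ 0 := by rw [ha]; intro h; nlinarith
  have hyne : (1:ℝ) + yv ≠ 0 := by rw [hyv]; intro h; nlinarith
  have hdup1 := rogersL_duplication hamem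
  have heq1 : a ^ 2 = yv := by
    rw [ha, hyv]; linear_combination (1/4 : ℝ) * hs5
  have heq2 : a / (1 + a) = yv := by
    rw [div_eq_iff hane, ha, hyv]
    linear_combination (1/4 : ℝ) * hs5
  rw [heq1, heq2] at hdup1
  have hrefl := rogersL_reflection hymem
  have heq3 : 1 - yv = a := by rw [ha, hyv]; ring
  rw [heq3] at hrefl
  have hy15 : rogersL yv = Real.pi ^ 2 / 15 := by linarith
  have hdup2 := rogersL_duplication hymem
  have heq4 : yv ^ 2 = 7 / 2 - 3 * s / 2 := by
    rw [hyv]; linear_combination (1/4 : ℝ) * hs5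
  have heq5 : yv / (1 + yv) = 1 / 2 - s / 10 := by
    rw [div_eq_iff hyne, hyv]
    linear_combination (-1/20 : ℝ) * hs5
  rw [heq4, heq5, hy15] at hdup2
  linarith
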